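/- Let g ≥ 2 and let h = (1 3 5 ⋯ 2g−1) and v = (1 2)(3 4)⋯(2g−3 2g−2) be permutations of {1,…,2g−1}. Then the commutator [h,v] is a single cycle of length 2g−1 (i.e. it has no fixed points and is a (2g−1)-cycle). -/

import Mathlib

open scoped commutatorElement

open Equiv

/-!
Both `h` and `v` are given by explicit piecewise formulas, hence so is `⁅h, v⁆ = h v h⁻¹ v⁻¹`.
Writing `g = m + 1`, the commutator sends `1 ↦ 3 ↦ ⋯ ↦ 2m+1 ↦ 2m ↦ 2m-2 ↦ ⋯ ↦ 2 ↦ 1` and fixes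
every other natural number, so it is the cycle through this chain.
-/

namespace Equiv.Perm

variable {α : Type*} {f : Perm α} {a : ℕ → α} {n : ℕ}

theorem sameCycle_of_apply_chain (hchain : ∀ k < n, f (a k) = a (k + 1)) :
    ∀ k ≤ n, f.SameCycle (a 0) (a k) := by
  intro k hk
  induction k with
  | zero => exact .refl f _
  | succ k ih =>
    rw [← hchain k hk]
    exact sameCycle_apply_right.2 (ih (by omega))

theorem isCycle_of_apply_chain (hchain : ∀ k < n, f (a k) = a (k + 1)) (hmoved : f (a 0) ≠ a 0)
    (hsupp : ∀ y, f y ≠ y → ∃ k ≤ n, a k = y) : f.IsCycle := by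
  refine ⟨a 0, hmoved, fun y hy => ?_⟩
  obtain ⟨k, hk, rfl⟩ := hsupp y hy
  exact sameCycle_of_apply_chain hchain k hk

end Equiv.Perm

/-- The cycle `(1 3 ⋯ 2m+1)`. -/
def oddCycle (m : ℕ) : Perm ℕ :=
  ((List.range m).map (fun i => swap (2 * i + 1) (2 * i + 3))).prod

def pairSwaps (m : ℕ) : Perm ℕ :=
  ((List.range m).map (fun i => swap (2 * i + 1) (2 * i + 2))).prod

theorem oddCycle_apply (m x : ℕ) :
    oddCycle m x =
      if x % 2 = 1 ∧ x < 2 * m + 1 then x + 2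
      else if x = 2 * m + 1 ∧ 0 < m then 1 else x := by
  induction m generalizing x with
  | zero =>
    simp only [oddCycle, List.range_zero, List.map_nil, List.prod_nil, Perm.coe_one, id_eq]
    split_ifs <;> omega
  | succ m ih =>
    rw [oddCycle, List.prod_range_succ, Perm.mul_apply, swap_apply_def, ← oddCycle, ih]
    split_ifs <;> omega

theorem oddCycle_inv_apply (m x : ℕ) :
    (oddCycle m)⁻¹ x =
      if x % 2 = 1 ∧ 2 < x ∧ x ≤ 2 * m + 1 then x - 2
      else if x = 1 ∧ 0 < m then 2 * m + 1 else x := by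
  rw [Perm.inv_eq_iff_eq, oddCycle_apply]
  split_ifs <;> omega

theorem pairSwaps_apply (m x : ℕ) :
    pairSwaps m x =
      if x % 2 = 1 ∧ x < 2 * m then x + 1
      else if x % 2 = 0 ∧ 0 < x ∧ x ≤ 2 * m then x - 1 else x := by
  induction m generalizing x with
  | zero =>
    simp only [pairSwaps, List.range_zero, List.map_nil, List.prod_nil, Perm.coe_one, id_eq]
    split_ifs <;> omega
  | succ m ih =>
    rw [pairSwaps, List.prod_range_succ, Perm.mul_apply, swap_apply_def, ← pairSwaps, ih]
    split_ifs <;> omega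

theorem pairSwaps_inv (m : ℕ) : (pairSwaps m)⁻¹ = pairSwaps m := by
  rw [inv_eq_iff_mul_eq_one]
  ext x
  rw [Perm.mul_apply, pairSwaps_apply, pairSwaps_apply, Perm.one_apply]
  split_ifs <;> omega

theorem commutator_oddCycle_pairSwaps_apply {m : ℕ} (hm : 1 ≤ m) (x : ℕ) :
    ⁅oddCycle m, pairSwaps m⁆ x =
      if x % 2 = 1 ∧ x < 2 * m + 1 then x + 2
      else if x = 2 * m + 1 then 2 * m
      else if x % 2 = 0 ∧ 4 ≤ x ∧ x ≤ 2 * m then x - 2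
      else if x = 2 then 1 else x := by
  rw [commutatorElement_def, pairSwaps_inv]
  simp only [Perm.mul_apply]
  have h_inv_v : (oddCycle m)⁻¹ (pairSwaps m x) =
      if x % 2 = 1 ∧ x < 2 * m then x + 1
      else if x = 2 then 2 * m + 1
      else if x % 2 = 0 ∧ 4 ≤ x ∧ x ≤ 2 * m then x - 3
      else if x = 2 * m + 1 then 2 * m - 1 else x := by
    rw [pairSwaps_apply, oddCycle_inv_apply]
    split_ifs <;> omega
  have v_h_inv_v : pairSwaps m ((oddCycle m)⁻¹ (pairSwaps m x)) =
      if x % 2 = 1 ∧ x < 2 * m then x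
      else if x = 2 then 2 * m + 1
      else if x % 2 = 0 ∧ 4 ≤ x ∧ x ≤ 2 * m then x - 2
      else if x = 2 * m + 1 then 2 * m else x := by
    rw [h_inv_v, pairSwaps_apply]
    split_ifs <;> omega
  rw [v_h_inv_v, oddCycle_apply]
  split_ifs <;> omega

def commutatorChain (m k : ℕ) : ℕ :=
  if k ≤ m then 2 * k + 1 else 2 * (2 * m + 1 - k)

theorem exists_commutatorChain_eq {m y : ℕ} (hy : y ∈ Set.Icc 1 (2 * m + 1)) :
    ∃ k ≤ 2 * m, commutatorChain m k = y := by
  rw [Set.mem_Icc] at hy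
  refine ⟨if y % 2 = 1 then y / 2 else 2 * m + 1 - y / 2, by split_ifs <;> omega, ?_⟩
  simp only [commutatorChain]
  split_ifs <;> omega

section

variable {m : ℕ} (hm : 1 ≤ m)
include hm

theorem commutator_oddCycle_pairSwaps_apply_commutatorChain {k : ℕ} (hk : k < 2 * m) :
    ⁅oddCycle m, pairSwaps m⁆ (commutatorChain m k) = commutatorChain m (k + 1) := by
  simp only [commutatorChain, commutator_oddCycle_pairSwaps_apply hm]
  split_ifs <;> omega

theorem setOf_commutator_oddCycle_pairSwaps_apply_ne :
    {x | ⁅oddCycle m, pairSwaps m⁆ x ≠ x} = Set.Icc 1 (2 * m + 1) := by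
  ext x
  simp only [Set.mem_ofPred_eq, Set.mem_Icc, commutator_oddCycle_pairSwaps_apply hm]
  split_ifs <;> omega

theorem isCycle_commutator_oddCycle_pairSwaps : ⁅oddCycle m, pairSwaps m⁆.IsCycle := by
  refine Perm.isCycle_of_apply_chain (a := commutatorChain m) (n := 2 * m)
    (fun k hk => commutator_oddCycle_pairSwaps_apply_commutatorChain hm hk) ?_ fun y hy => ?_
  · simp only [commutatorChain, commutator_oddCycle_pairSwaps_apply hm]
    split_ifs <;> omega
  · apply exists_commutatorChain_eq
    rw [← setOf_commutator_oddCycle_pairSwaps_apply_ne hm]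
    exact hy

end

/-- For `g ≥ 2`, with `h = (1 3 5 ⋯ 2g−1)` and `v = (1 2)(3 4)⋯(2g−3 2g−2)` in
the symmetric group on `{1,…,2g−1}`, the commutator `[h, v]` is a single cycle
of length `2g−1`: it is a cycle and its set of moved points is exactly
`{1, …, 2g−1}` (so it has no fixed points there and is a `(2g−1)`-cycle). -/
theorem commutator_of_odd_perms_isCycle (g : ℕ) (hg : 2 ≤ g)
    (h v : Equiv.Perm ℕ)
    (hh : h = ((List.range (g - 1)).map (fun i => Equiv.swap (2 * i + 1) (2 * i + 3))).prod)
    (hv : v = ((List.range (g - 1)).map (fun i => Equiv.swap (2 * i + 1) (2 * i + 2))).prod) :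
    (⁅h, v⁆).IsCycle ∧ {x : ℕ | ⁅h, v⁆ x ≠ x} = Set.Icc 1 (2 * g - 1) := by
  obtain ⟨m, rfl⟩ : ∃ m, g = m + 1 := ⟨g - 1, by omega⟩
  have hm : 1 ≤ m := by omega
  replace hh : h = oddCycle m := hh
  replace hv : v = pairSwaps m := hv
  subst hh hv
  rw [show 2 * (m + 1) - 1 = 2 * m + 1 by omega]
  exact ⟨isCycle_commutator_oddCycle_pairSwaps hm, setOf_commutator_oddCycle_pairSwaps_apply_ne hm⟩
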